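/- arXiv:2403.01379 — 5 statements merged into one kernel-verified Lean document; each statement's English description precedes it below -/
import Mathlib

section
/- Let α ∈ (0,2), β ∈ (0,1), C > 0 and define G(t,x) = C t^β / (t^{2β/α} + x^2)^{(1+α)/2} for t > 0 and x ∈ ℝ. Then for all t > 0 and x, y ∈ ℝ, G(t, x - y) ≥ 2^{-(1+α)} C^{-1} t^{β/α} G(t,x) G(t,y). -/
theorem stmt_1 (α β C : ℝ) (hα : 0 < α) (hα2 : α < 2) (hβ : 0 < β) (hβ1 : β < 1)
    (hC : 0 < C)
    (G : ℝ → ℝ → ℝ)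
    (hG : ∀ t x, G t x = C * t ^ β / (t ^ (2 * β / α) + x ^ 2) ^ ((1 + α) / 2)) :
    ∀ t x y : ℝ, 0 < t →
      G t (x - y) ≥ (2:ℝ) ^ (-(1 + α)) * C⁻¹ * t ^ (β / α) * G t x * G t y := by
  intro t x y ht
  rw [hG, hG, hG]
  set p : ℝ := (1 + α) / 2 with hpdef
  have hp0 : 0 ≤ p := by rw [hpdef]; linarith
  have ha0 : (0:ℝ) < t ^ (2 * β / α) := Real.rpow_pos_of_pos ht _
  set a : ℝ := t ^ (2 * β / α) with hadef
  have h1 : (0:ℝ) < a + x ^ 2 := by positivity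
  have h2 : (0:ℝ) < a + y ^ 2 := by positivity
  have h3 : (0:ℝ) < a + (x - y) ^ 2 := by positivity
  have hD1 : 0 < (a + x ^ 2) ^ p := Real.rpow_pos_of_pos h1 _
  have hD2 : 0 < (a + y ^ 2) ^ p := Real.rpow_pos_of_pos h2 _
  have hD3 : 0 < (a + (x - y) ^ 2) ^ p := Real.rpow_pos_of_pos h3 _
  have hap : a ^ p = t ^ (β / α + β) := by
    rw [hadef, ← Real.rpow_mul ht.le]
    congr 1
    field_simp
    ring
  have hbase : a * (a + (x - y) ^ 2) ≤ 2 * ((a + x ^ 2) * (a + y ^ 2)) := by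
    nlinarith [sq_nonneg (x + y), sq_nonneg (x * y), sq_nonneg a,
      mul_nonneg ha0.le (sq_nonneg (x + y))]
  have hkey : a ^ p * (a + (x - y) ^ 2) ^ p
      ≤ (2:ℝ) ^ p * ((a + x ^ 2) ^ p * (a + y ^ 2) ^ p) := by
    rw [← Real.mul_rpow ha0.le h3.le, ← Real.mul_rpow h1.le h2.le,
      ← Real.mul_rpow (by norm_num) (mul_pos h1 h2).le]
    exact Real.rpow_le_rpow (by positivity) hbase hp0
  have h2p : (2:ℝ) ^ (-(1 + α)) * 2 ^ p ≤ 1 := by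
    rw [← Real.rpow_add (by norm_num : (0:ℝ) < 2)]
    exact Real.rpow_le_one_of_one_le_of_nonpos one_le_two (by rw [hpdef]; linarith)
  have hkey2 : (2:ℝ) ^ (-(1 + α)) * (a ^ p * (a + (x - y) ^ 2) ^ p)
      ≤ (a + x ^ 2) ^ p * (a + y ^ 2) ^ p := by
    calc (2:ℝ) ^ (-(1 + α)) * (a ^ p * (a + (x - y) ^ 2) ^ p)
        ≤ (2:ℝ) ^ (-(1 + α)) * ((2:ℝ) ^ p * ((a + x ^ 2) ^ p * (a + y ^ 2) ^ p)) :=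
          mul_le_mul_of_nonneg_left hkey (by positivity)
      _ = ((2:ℝ) ^ (-(1 + α)) * 2 ^ p) * ((a + x ^ 2) ^ p * (a + y ^ 2) ^ p) := by ring
      _ ≤ 1 * ((a + x ^ 2) ^ p * (a + y ^ 2) ^ p) :=
          mul_le_mul_of_nonneg_right h2p (by positivity)
      _ = _ := one_mul _
  have hrw : (2:ℝ) ^ (-(1 + α)) * C⁻¹ * t ^ (β / α) * (C * t ^ β / (a + x ^ 2) ^ p)
        * (C * t ^ β / (a + y ^ 2) ^ p)
      = (2:ℝ) ^ (-(1 + α)) * a ^ p * (C * t ^ β) / ((a + x ^ 2) ^ p * (a + y ^ 2) ^ p) := by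
    rw [hap, Real.rpow_add ht]
    field_simp
  rw [ge_iff_le, hrw, div_le_div_iff₀ (by positivity) hD3]
  calc (2:ℝ) ^ (-(1 + α)) * a ^ p * (C * t ^ β) * (a + (x - y) ^ 2) ^ p
      = (C * t ^ β) * ((2:ℝ) ^ (-(1 + α)) * (a ^ p * (a + (x - y) ^ 2) ^ p)) := by ring
    _ ≤ (C * t ^ β) * ((a + x ^ 2) ^ p * (a + y ^ 2) ^ p) :=
        mul_le_mul_of_nonneg_left hkey2 (by positivity)
    _ = C * t ^ β * ((a + x ^ 2) ^ p * (a + y ^ 2) ^ p) := by ring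
end

section
/- Let 0 < μ < 1 and Ψ > 0, and let E_{μ,ν}(z) = Σ_{k≥0} z^k / Γ(μk + ν) denote the two-parameter Mittag-Leffler function. Then lim_{t→∞} (1/t) log E_{μ,μ}(Ψ t^μ) = Ψ^{1/μ}. -/
open Real Filter
open scoped Nat

/-- The two-parameter Mittag-Leffler function `E_{μ,ν}(z) = ∑ₖ zᵏ / Γ(μk + ν)`. -/
noncomputable def mittagLeffler (μ ν z : ℝ) : ℝ :=
  ∑' k : ℕ, z ^ k / Real.Gamma (μ * k + ν)

namespace MLaux

lemma exp_one_mul_pow_le (n : ℕ) (hn : 1 ≤ n) :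
    Real.exp 1 * (n : ℝ) ^ (n + 1) ≤ ((n : ℝ) + 1) ^ (n + 1) := by
  have hn0 : (0 : ℝ) < n := by exact_mod_cast hn
  have hn1 : (0 : ℝ) < (n : ℝ) + 1 := by positivity
  have h3 : (n : ℝ) / ((n : ℝ) + 1) ≤ Real.exp (-(1 / ((n : ℝ) + 1))) := by
    have h := Real.add_one_le_exp (-(1 / ((n : ℝ) + 1)))
    have he : -(1 / ((n : ℝ) + 1)) + 1 = (n : ℝ) / ((n : ℝ) + 1) := by field_simp; ring
    linarith [he ▸ h]
  have h4 : Real.exp (1 / ((n : ℝ) + 1)) * ((n : ℝ) / ((n : ℝ) + 1)) ≤ 1 := by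
    have := mul_le_mul_of_nonneg_left h3 (Real.exp_pos (1 / ((n : ℝ) + 1))).le
    rwa [← Real.exp_add, add_neg_cancel, Real.exp_zero] at this
  have h1 : Real.exp (1 / ((n : ℝ) + 1)) ≤ ((n : ℝ) + 1) / n := by
    rw [le_div_iff₀ hn0]
    have h4' := mul_le_mul_of_nonneg_right h4 hn1.le
    have heq : Real.exp (1 / ((n : ℝ) + 1)) * ((n : ℝ) / ((n : ℝ) + 1)) * ((n : ℝ) + 1)
        = Real.exp (1 / ((n : ℝ) + 1)) * (n : ℝ) := by field_simp
    rw [heq, one_mul] at h4'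
    exact h4'
  have h6 : Real.exp 1 = Real.exp (1 / ((n : ℝ) + 1)) ^ (n + 1) := by
    rw [← Real.exp_nat_mul]
    congr 1
    push_cast
    field_simp
  have h5 : Real.exp 1 ≤ (((n : ℝ) + 1) / n) ^ (n + 1) := by
    rw [h6]
    exact pow_le_pow_left₀ (Real.exp_pos _).le h1 _
  calc Real.exp 1 * (n : ℝ) ^ (n + 1)
      ≤ (((n : ℝ) + 1) / n) ^ (n + 1) * (n : ℝ) ^ (n + 1) :=
        mul_le_mul_of_nonneg_right h5 (by positivity)
    _ = ((n : ℝ) + 1) ^ (n + 1) := by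
        rw [← mul_pow, div_mul_cancel₀ _ hn0.ne']

lemma factorial_ub (n : ℕ) (hn : 1 ≤ n) :
    (n ! : ℝ) * Real.exp n ≤ Real.exp 1 * (n : ℝ) ^ (n + 1) := by
  induction n, hn using Nat.le_induction with
  | base => simp [Real.exp_nonneg]
  | succ n hn ih =>
    have h1 := exp_one_mul_pow_le n hn
    have hpos : (0 : ℝ) < (n : ℝ) + 1 := by positivity
    have he1 : (0 : ℝ) < Real.exp 1 := Real.exp_pos 1
    have step1 : ((n + 1)! : ℝ) * Real.exp (((n + 1 : ℕ)) : ℝ)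
        = ((n : ℝ) + 1) * ((n ! : ℝ) * Real.exp n) * Real.exp 1 := by
      push_cast [Nat.factorial_succ, Real.exp_add]
      ring
    rw [step1]
    calc ((n : ℝ) + 1) * ((n ! : ℝ) * Real.exp n) * Real.exp 1
        ≤ ((n : ℝ) + 1) * (Real.exp 1 * (n : ℝ) ^ (n + 1)) * Real.exp 1 := by
          have := mul_le_mul_of_nonneg_left ih hpos.le
          exact mul_le_mul_of_nonneg_right this he1.le
      _ = ((n : ℝ) + 1) * (Real.exp 1 * (Real.exp 1 * (n : ℝ) ^ (n + 1))) := by ring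
      _ ≤ ((n : ℝ) + 1) * (Real.exp 1 * ((n : ℝ) + 1) ^ (n + 1)) := by
          have := mul_le_mul_of_nonneg_left h1 he1.le
          exact mul_le_mul_of_nonneg_left this hpos.le
      _ = Real.exp 1 * (((n : ℝ) + 1) ^ (n + 1 + 1)) := by ring
      _ = Real.exp 1 * (((n + 1 : ℕ) : ℝ)) ^ (n + 1 + 1) := by push_cast; ring

lemma Gamma_mono : MonotoneOn Real.Gamma (Set.Ici 2) :=
  Real.Gamma_strictMonoOn_Ici.monotoneOn

lemma one_le_Gamma {s : ℝ} (hs : 2 ≤ s) : 1 ≤ Real.Gamma s := by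
  have := Gamma_mono (Set.self_mem_Ici) (Set.mem_Ici.2 hs) hs
  rwa [Real.Gamma_two] at this

lemma floor_factorial_le_Gamma {s : ℝ} (hs : 0 < s) :
    (((⌊s⌋₊ - 1)! : ℕ) : ℝ) ≤ 6 * Real.Gamma s := by
  have hΓ := Real.Gamma_pos_of_pos hs
  rcases le_or_gt 2 s with h2 | h2
  · have hfl2 : 2 ≤ ⌊s⌋₊ := Nat.le_floor (by exact_mod_cast h2)
    have h1 : ((⌊s⌋₊ : ℕ) : ℝ) ≤ s := Nat.floor_le hs.le
    have hcast : ((⌊s⌋₊ : ℕ) : ℝ) = ((⌊s⌋₊ - 1 : ℕ) : ℝ) + 1 := by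
      have h : ⌊s⌋₊ - 1 + 1 = ⌊s⌋₊ := by omega
      rw [← h]; push_cast; ring
    have hmem : ((⌊s⌋₊ : ℕ) : ℝ) ∈ Set.Ici (2 : ℝ) := by
      simp only [Set.mem_Ici]; exact_mod_cast hfl2
    have hle := Gamma_mono hmem (Set.mem_Ici.2 (le_trans (by exact_mod_cast hfl2) h1)) h1
    rw [hcast, Real.Gamma_nat_eq_factorial] at hle
    linarith
  · have hfl : ⌊s⌋₊ ≤ 1 := by
      by_contra h
      push_neg at h
      have : (2 : ℝ) ≤ (⌊s⌋₊ : ℝ) := by exact_mod_cast h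
      linarith [Nat.floor_le hs.le]
    have h0 : ⌊s⌋₊ - 1 = 0 := by omega
    rw [h0]
    simp only [Nat.factorial_zero, Nat.cast_one]
    have hg2 : (1 : ℝ) ≤ Real.Gamma (s + 2) := one_le_Gamma (by linarith)
    have he1 : Real.Gamma (s + 1) = s * Real.Gamma s := Real.Gamma_add_one hs.ne'
    have he2 : Real.Gamma (s + 2) = (s + 1) * Real.Gamma (s + 1) := by
      have h := Real.Gamma_add_one (s := s + 1) (by positivity)
      rwa [show s + 1 + 1 = s + 2 by ring] at h
    rw [he2, he1] at hg2
    have hb : (s + 1) * s ≤ 6 := by nlinarith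
    calc (1 : ℝ) ≤ (s + 1) * (s * Real.Gamma s) := hg2
      _ = (s + 1) * s * Real.Gamma s := by ring
      _ ≤ 6 * Real.Gamma s := mul_le_mul_of_nonneg_right hb hΓ.le

lemma Gamma_ub {s : ℝ} (hs : 2 ≤ s) :
    Real.Gamma s ≤ Real.exp (2 - s) * s ^ (s + 1) := by
  set m : ℕ := ⌈s⌉₊ - 1 with hm
  have hs0 : (0 : ℝ) < s := by linarith
  have hceil2 : 2 ≤ ⌈s⌉₊ := by
    have h1 : (1 : ℝ) < s := by linarith
    have := Nat.lt_ceil.2 (by exact_mod_cast h1 : ((1 : ℕ) : ℝ) < s)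
    omega
  have hm1 : 1 ≤ m := by omega
  have hcast : ((m : ℝ)) + 1 = (⌈s⌉₊ : ℝ) := by
    have h : m + 1 = ⌈s⌉₊ := by omega
    exact_mod_cast h
  have hsm : s ≤ (m : ℝ) + 1 := by rw [hcast]; exact Nat.le_ceil s
  have hms : (m : ℝ) ≤ s := by
    have h := Nat.ceil_lt_add_one hs0.le
    linarith [hcast ▸ h]
  have hmono := Gamma_mono (Set.mem_Ici.2 hs) (Set.mem_Ici.2 (le_trans hs hsm)) hsm
  have hfact : Real.Gamma ((m : ℝ) + 1) = (m ! : ℝ) := Real.Gamma_nat_eq_factorial m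
  have hub2 : (m ! : ℝ) ≤ Real.exp (1 - m) * (m : ℝ) ^ (m + 1) := by
    have hexp : (0 : ℝ) < Real.exp m := Real.exp_pos _
    rw [Real.exp_sub, div_mul_eq_mul_div, le_div_iff₀ hexp]
    exact factorial_ub m hm1
  have hpow : ((m : ℝ)) ^ (m + 1) ≤ s ^ (s + 1) := by
    have h1 : ((m : ℝ)) ^ (m + 1) = (m : ℝ) ^ (((m + 1 : ℕ)) : ℝ) := by
      rw [Real.rpow_natCast]
    rw [h1]
    calc (m : ℝ) ^ (((m + 1 : ℕ)) : ℝ) ≤ s ^ (((m + 1 : ℕ)) : ℝ) := by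
          apply Real.rpow_le_rpow (by positivity) hms (by positivity)
      _ ≤ s ^ (s + 1) := by
          apply Real.rpow_le_rpow_of_exponent_le (by linarith)
          push_cast
          linarith
  have hexp2 : Real.exp (1 - (m : ℝ)) ≤ Real.exp (2 - s) := by
    apply Real.exp_le_exp.2
    linarith
  calc Real.Gamma s ≤ Real.Gamma ((m : ℝ) + 1) := hmono
    _ = (m ! : ℝ) := hfact
    _ ≤ Real.exp (1 - m) * (m : ℝ) ^ (m + 1) := hub2
    _ ≤ Real.exp (2 - s) * s ^ (s + 1) :=
        mul_le_mul hexp2 hpow (by positivity) (Real.exp_pos _).le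

lemma term_le {μ : ℝ} (hμ : 0 < μ) {x ε : ℝ} (hx : 1 ≤ x) (hε : 0 < ε) (k : ℕ) :
    x ^ k / Real.Gamma (μ * k + μ) ≤
      (6 * (x ^ (1/μ)) ^ (2:ℝ) * Real.exp ((1+ε) * x ^ (1/μ)) * (1+ε) ^ (2:ℝ))
        * ((1+ε) ^ (-μ)) ^ k := by
  have hx0 : (0 : ℝ) < x := by linarith
  set y : ℝ := x ^ (1/μ) with hy
  have hy0 : (0 : ℝ) < y := Real.rpow_pos_of_pos hx0 _
  have hy1 : (1 : ℝ) ≤ y := by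
    rw [hy, show (1:ℝ) = x ^ (0:ℝ) by rw [Real.rpow_zero]]
    exact Real.rpow_le_rpow_of_exponent_le hx (by positivity)
  set s : ℝ := μ * k + μ with hsdef
  have hs0 : (0 : ℝ) < s := by positivity
  set m : ℕ := ⌊s⌋₊ - 1 with hm
  have hfl : (⌊s⌋₊ : ℕ) ≤ m + 1 := by omega
  have hm2 : s ≤ (m : ℝ) + 2 := by
    have h1 : s < (⌊s⌋₊ : ℝ) + 1 := Nat.lt_floor_add_one s
    have h2 : ((⌊s⌋₊ : ℕ) : ℝ) ≤ (m : ℝ) + 1 := by exact_mod_cast hfl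
    linarith
  have hm1 : s - 2 ≤ (m : ℝ) := by
    rcases Nat.eq_zero_or_pos ⌊s⌋₊ with h0 | hpos
    · have : s < 1 := by
        have := Nat.lt_floor_add_one s
        rw [h0] at this
        simpa using this
      have : (0:ℝ) ≤ (m:ℝ) := by positivity
      linarith
    · have hcast : (m : ℝ) = (⌊s⌋₊ : ℝ) - 1 := by
        have : m + 1 = ⌊s⌋₊ := by omega
        have := congrArg (fun n : ℕ => (n : ℝ)) this
        push_cast at this
        linarith
      have hfl2 : s - 1 < (⌊s⌋₊ : ℝ) := Nat.sub_one_lt_floor s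
      linarith
  have hε1 : (1 : ℝ) ≤ 1 + ε := by linarith
  have hε0 : (0 : ℝ) < 1 + ε := by linarith
  -- step A
  have hΓ6 : (m ! : ℝ) ≤ 6 * Real.Gamma s := floor_factorial_le_Gamma hs0
  have hfac0 : (0 : ℝ) < (m ! : ℝ) := by exact_mod_cast Nat.factorial_pos m
  have hΓpos : 0 < Real.Gamma s := Real.Gamma_pos_of_pos hs0
  have stepA : x ^ k / Real.Gamma s ≤ 6 * x ^ k / (m ! : ℝ) := by
    rw [div_le_div_iff₀ hΓpos hfac0]
    have hxk : (0:ℝ) ≤ x ^ k := by positivity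
    calc x ^ k * (m ! : ℝ) ≤ x ^ k * (6 * Real.Gamma s) :=
          mul_le_mul_of_nonneg_left hΓ6 hxk
      _ = 6 * x ^ k * Real.Gamma s := by ring
  -- step B/C : x^k ≤ y^2 * y^m
  have hxk_eq : (x : ℝ) ^ k = y ^ (μ * (k : ℝ)) := by
    rw [hy, ← Real.rpow_mul hx0.le]
    rw [show 1/μ * (μ * (k:ℝ)) = (k:ℝ) by field_simp]
    rw [Real.rpow_natCast]
  have hBC : (x : ℝ) ^ k ≤ y ^ (2:ℝ) * y ^ m := by
    rw [hxk_eq]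
    have h1 : μ * (k : ℝ) ≤ (m : ℝ) + 2 := by
      have : μ * (k:ℝ) ≤ s := by rw [hsdef]; linarith
      linarith
    calc y ^ (μ * (k:ℝ)) ≤ y ^ ((m : ℝ) + 2) :=
          Real.rpow_le_rpow_of_exponent_le hy1 h1
      _ = y ^ (2:ℝ) * y ^ m := by
          rw [show (m:ℝ) + 2 = 2 + (m:ℝ) by ring, Real.rpow_add hy0,
            Real.rpow_natCast]
  -- step D
  have hD : y ^ m / (m ! : ℝ) ≤ Real.exp ((1+ε) * y) *
      ((1+ε) ^ (2:ℝ) * ((1+ε) ^ (-μ)) ^ k) := by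
    have hexp := Real.pow_div_factorial_le_exp (x := (1+ε) * y) (by positivity) m
    rw [mul_pow] at hexp
    have hpow_pos : (0:ℝ) < (1+ε) ^ m := by positivity
    have h1 : y ^ m / (m ! : ℝ) ≤ Real.exp ((1+ε) * y) / (1+ε) ^ m := by
      rw [le_div_iff₀ hpow_pos]
      calc y ^ m / (m ! : ℝ) * (1+ε) ^ m
          = (1+ε) ^ m * y ^ m / (m ! : ℝ) := by ring
        _ ≤ Real.exp ((1+ε)*y) := hexp
    have h2 : ((1:ℝ)+ε) ^ m = (1+ε) ^ ((m:ℕ) : ℝ) := (Real.rpow_natCast _ m).symm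
    have h3 : Real.exp ((1+ε)*y) / (1+ε) ^ m
        = Real.exp ((1+ε)*y) * (1+ε) ^ (-(m:ℝ)) := by
      rw [h2, Real.rpow_neg hε0.le, div_eq_mul_inv]
    have h4 : ((1:ℝ)+ε) ^ (-(m:ℝ)) ≤ (1+ε) ^ (2 - μ * k) := by
      apply Real.rpow_le_rpow_of_exponent_le hε1
      have : μ * (k:ℝ) ≤ s := by rw [hsdef]; linarith
      linarith
    have h5 : ((1:ℝ)+ε) ^ (2 - μ * (k:ℝ)) = (1+ε) ^ (2:ℝ) * ((1+ε) ^ (-μ)) ^ k := by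
      rw [show (2:ℝ) - μ * k = 2 + (-μ) * (k:ℝ) by ring, Real.rpow_add hε0,
        Real.rpow_mul hε0.le, Real.rpow_natCast]
    calc y ^ m / (m ! : ℝ) ≤ Real.exp ((1+ε)*y) / (1+ε) ^ m := h1
      _ = Real.exp ((1+ε)*y) * (1+ε) ^ (-(m:ℝ)) := h3
      _ ≤ Real.exp ((1+ε)*y) * ((1+ε) ^ (2 - μ*(k:ℝ))) :=
          mul_le_mul_of_nonneg_left h4 (Real.exp_pos _).le
      _ = Real.exp ((1+ε)*y) * ((1+ε) ^ (2:ℝ) * ((1+ε) ^ (-μ)) ^ k) := by rw [h5]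
  -- combine
  calc x ^ k / Real.Gamma s ≤ 6 * x ^ k / (m ! : ℝ) := stepA
    _ ≤ 6 * (y ^ (2:ℝ) * y ^ m) / (m ! : ℝ) := by
        gcongr
    _ = 6 * y ^ (2:ℝ) * (y ^ m / (m ! : ℝ)) := by ring
    _ ≤ 6 * y ^ (2:ℝ) * (Real.exp ((1+ε)*y) * ((1+ε) ^ (2:ℝ) * ((1+ε) ^ (-μ)) ^ k)) := by
        apply mul_le_mul_of_nonneg_left hD (by positivity)
    _ = (6 * y ^ (2:ℝ) * Real.exp ((1+ε) * y) * (1+ε) ^ (2:ℝ)) * ((1+ε) ^ (-μ)) ^ k := by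
        ring

lemma q_nonneg {ε μ : ℝ} (hε : 0 < ε) : (0:ℝ) ≤ (1+ε) ^ (-μ) :=
  Real.rpow_nonneg (by linarith) _

lemma q_lt_one {ε μ : ℝ} (hε : 0 < ε) (hμ : 0 < μ) : (1+ε) ^ (-μ) < 1 :=
  Real.rpow_lt_one_of_one_lt_of_neg (by linarith) (by linarith)

lemma ML_summable {μ : ℝ} (hμ : 0 < μ) {x : ℝ} (hx : 1 ≤ x) :
    Summable (fun k : ℕ => x ^ k / Real.Gamma (μ * k + μ)) := by
  have hgeo : Summable (fun k : ℕ =>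
      (6 * (x ^ (1/μ)) ^ (2:ℝ) * Real.exp ((1+1) * x ^ (1/μ)) * (1+1) ^ (2:ℝ))
        * ((1+(1:ℝ)) ^ (-μ)) ^ k) :=
    (summable_geometric_of_lt_one (q_nonneg one_pos) (q_lt_one one_pos hμ)).mul_left _
  refine Summable.of_nonneg_of_le (fun k => ?_) (fun k => term_le hμ hx one_pos k) hgeo
  have hx0 : (0:ℝ) < x := by linarith
  have : 0 < Real.Gamma (μ * k + μ) := Real.Gamma_pos_of_pos (by positivity)
  positivity

lemma ML_pos {μ : ℝ} (hμ : 0 < μ) {x : ℝ} (hx : 1 ≤ x) :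
    0 < mittagLeffler μ μ x := by
  have hx0 : (0:ℝ) < x := by linarith
  refine Summable.tsum_pos (ML_summable hμ hx) (fun k => ?_) 0 ?_
  · have : 0 < Real.Gamma (μ * k + μ) := Real.Gamma_pos_of_pos (by positivity)
    positivity
  · have : 0 < Real.Gamma (μ * 0 + μ) := Real.Gamma_pos_of_pos (by positivity)
    positivity

lemma ML_ub {μ : ℝ} (hμ : 0 < μ) {x ε : ℝ} (hx : 1 ≤ x) (hε : 0 < ε) :
    mittagLeffler μ μ x ≤
      (6 * (x ^ (1/μ)) ^ (2:ℝ) * Real.exp ((1+ε) * x ^ (1/μ)) * (1+ε) ^ (2:ℝ))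
        * (1 - (1+ε) ^ (-μ))⁻¹ := by
  have hx0 : (0:ℝ) < x := by linarith
  have hgeo : Summable (fun k : ℕ =>
      (6 * (x ^ (1/μ)) ^ (2:ℝ) * Real.exp ((1+ε) * x ^ (1/μ)) * (1+ε) ^ (2:ℝ))
        * ((1+ε) ^ (-μ)) ^ k) :=
    (summable_geometric_of_lt_one (q_nonneg hε) (q_lt_one hε hμ)).mul_left _
  calc mittagLeffler μ μ x
      ≤ ∑' k : ℕ, (6 * (x ^ (1/μ)) ^ (2:ℝ) * Real.exp ((1+ε) * x ^ (1/μ))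
          * (1+ε) ^ (2:ℝ)) * ((1+ε) ^ (-μ)) ^ k :=
        Summable.tsum_le_tsum (fun k => term_le hμ hx hε k) (ML_summable hμ hx) hgeo
    _ = (6 * (x ^ (1/μ)) ^ (2:ℝ) * Real.exp ((1+ε) * x ^ (1/μ)) * (1+ε) ^ (2:ℝ))
        * (1 - (1+ε) ^ (-μ))⁻¹ := by
        rw [tsum_mul_left, tsum_geometric_of_lt_one (q_nonneg hε) (q_lt_one hε hμ)]

lemma ML_lb {μ : ℝ} (hμ : 0 < μ) (hμ1 : μ < 1) {x : ℝ} (hx : 2 ≤ x) :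
    x ^ (1/μ) - 4 - 3 * Real.log (x ^ (1/μ) + 2) ≤ Real.log (mittagLeffler μ μ x) := by
  have hx1 : (1:ℝ) ≤ x := by linarith
  have hx0 : (0:ℝ) < x := by linarith
  set y : ℝ := x ^ (1/μ) with hy
  have hy0 : (0:ℝ) < y := Real.rpow_pos_of_pos hx0 _
  have hy2 : (2:ℝ) ≤ y := by
    have h1 : (1:ℝ) ≤ 1/μ := by
      rw [le_div_iff₀ hμ]; linarith
    calc (2:ℝ) ≤ x := hx
      _ = x ^ (1:ℝ) := (Real.rpow_one x).symm
      _ ≤ x ^ (1/μ) := Real.rpow_le_rpow_of_exponent_le hx1 h1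
  set k : ℕ := ⌈y/μ⌉₊ with hk
  have hyμ0 : 0 < y/μ := by positivity
  have hk1 : y/μ ≤ (k:ℝ) := Nat.le_ceil _
  have hk2 : (k:ℝ) < y/μ + 1 := Nat.ceil_lt_add_one hyμ0.le
  set s : ℝ := μ * k + μ with hsdef
  have hμk_lb : y ≤ μ * k := by
    have := mul_le_mul_of_nonneg_left hk1 hμ.le
    rwa [mul_div_cancel₀ _ hμ.ne'] at this
  have hμk_ub : μ * k ≤ y + μ := by
    have := mul_le_mul_of_nonneg_left hk2.le hμ.le
    rw [mul_add, mul_div_cancel₀ _ hμ.ne', mul_one] at this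
    linarith
  have hs_lb : y + μ ≤ s := by rw [hsdef]; linarith
  have hs_ub : s ≤ y + 2 := by rw [hsdef]; linarith
  have hs2 : (2:ℝ) ≤ s := by linarith
  have hs0 : (0:ℝ) < s := by linarith
  have hΓpos : 0 < Real.Gamma s := Real.Gamma_pos_of_pos hs0
  have hterm_pos : (0:ℝ) < x ^ k / Real.Gamma s := by positivity
  have hterm_le : x ^ k / Real.Gamma s ≤ mittagLeffler μ μ x := by
    have := Summable.le_tsum (ML_summable hμ hx1) k (fun j _ => by
      have : 0 < Real.Gamma (μ * j + μ) := Real.Gamma_pos_of_pos (by positivity)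
      positivity)
    exact this
  have hlog1 : Real.log (x ^ k / Real.Gamma s) ≤ Real.log (mittagLeffler μ μ x) :=
    Real.log_le_log hterm_pos hterm_le
  have hlog2 : Real.log (x ^ k / Real.Gamma s) = k * Real.log x - Real.log (Real.Gamma s) := by
    rw [Real.log_div (by positivity) hΓpos.ne', Real.log_pow]
  have hlogΓ : Real.log (Real.Gamma s) ≤ (2 - s) + (s+1) * Real.log s := by
    calc Real.log (Real.Gamma s) ≤ Real.log (Real.exp (2 - s) * s ^ (s+1)) :=
          Real.log_le_log hΓpos (Gamma_ub hs2)
      _ = (2 - s) + (s+1) * Real.log s := by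
          rw [Real.log_mul (Real.exp_ne_zero _) (Real.rpow_pos_of_pos hs0 _).ne',
            Real.log_exp, Real.log_rpow hs0]
  have hlogy : Real.log y = (1/μ) * Real.log x := Real.log_rpow hx0 _
  have hlogx0 : 0 ≤ Real.log x := Real.log_nonneg hx1
  have hklogx : y * Real.log y ≤ (k:ℝ) * Real.log x := by
    calc y * Real.log y = (y/μ) * Real.log x := by rw [hlogy]; ring
      _ ≤ (k:ℝ) * Real.log x := mul_le_mul_of_nonneg_right hk1 hlogx0
  have hlogs0 : 0 ≤ Real.log s := Real.log_nonneg (by linarith)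
  have hspl : (s+1) * Real.log s ≤ (y+3) * Real.log (y+2) := by
    apply mul_le_mul (by linarith) (Real.log_le_log hs0 hs_ub) hlogs0 (by linarith)
  have hylog : y * Real.log (y+2) - 2 ≤ y * Real.log y := by
    have h1 : Real.log ((y+2)/y) ≤ (y+2)/y - 1 := Real.log_le_sub_one_of_pos (by positivity)
    rw [Real.log_div (by positivity) hy0.ne'] at h1
    have h2 : (y+2)/y - 1 = 2/y := by field_simp; ring
    rw [h2] at h1
    have h3 := mul_le_mul_of_nonneg_left h1 hy0.le
    rw [mul_div_cancel₀ _ hy0.ne'] at h3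
    nlinarith [h3]
  have hfin : y - 4 - 3 * Real.log (y+2) ≤ k * Real.log x - Real.log (Real.Gamma s) := by
    have e1 : (k:ℝ) * Real.log x - Real.log (Real.Gamma s)
        ≥ y * Real.log y + (s - 2) - (s+1) * Real.log s := by
      have := hklogx
      linarith [hlogΓ]
    nlinarith [e1, hspl, hylog, hs_lb, hμ.le]
  linarith [hlog1, hlog2 ▸ hlog1, hfin, hlog2]

end MLaux

open MLaux

/-- For `0 < μ < 1` and `Ψ > 0`, `(1/t) log E_{μ,μ}(Ψ tᵘ) → Ψ^{1/μ}` as `t → ∞`. -/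
theorem stmt_5 (μ Ψ : ℝ) (hμ : 0 < μ) (hμ1 : μ < 1) (hΨ : 0 < Ψ) :
    Tendsto (fun t : ℝ => (1 / t) * Real.log (mittagLeffler μ μ (Ψ * t ^ μ)))
      atTop (nhds (Ψ ^ (1 / μ))) := by
  set L : ℝ := Ψ ^ (1 / μ) with hL
  have hL0 : 0 < L := Real.rpow_pos_of_pos hΨ _
  have hx_ev : ∀ᶠ t in atTop, 2 ≤ Ψ * t ^ μ :=
    ((tendsto_rpow_atTop hμ).const_mul_atTop hΨ).eventually_ge_atTop 2
  have hy_eq : ∀ᶠ t : ℝ in atTop, (Ψ * t ^ μ) ^ (1/μ) = L * t := by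
    filter_upwards [eventually_gt_atTop 0] with t ht
    rw [Real.mul_rpow hΨ.le (Real.rpow_nonneg ht.le μ), ← Real.rpow_mul ht.le,
      mul_one_div_cancel hμ.ne', Real.rpow_one]
  have h1t : Tendsto (fun t : ℝ => 1 / t) atTop (nhds 0) := by
    simpa [one_div] using (tendsto_inv_atTop_zero : Tendsto (fun t : ℝ => t⁻¹) atTop (nhds 0))
  have hlogt : Tendsto (fun t : ℝ => Real.log t / t) atTop (nhds 0) := by
    simpa using Real.isLittleO_log_id_atTop.tendsto_div_nhds_zero
  rw [tendsto_order]
  constructor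
  · -- lower bound branch
    intro a ha
    have hg : Tendsto (fun t : ℝ =>
        L - 4 * (1/t) - 3 * (Real.log (L+2) * (1/t) + Real.log t / t))
        atTop (nhds L) := by
      have := (tendsto_const_nhds (x := L) (f := atTop)).sub
          (h1t.const_mul 4) |>.sub
          (((h1t.const_mul (Real.log (L+2))).add hlogt).const_mul 3)
      simpa using this
    have hga : ∀ᶠ t in atTop,
        a < L - 4 * (1/t) - 3 * (Real.log (L+2) * (1/t) + Real.log t / t) :=
      Filter.Tendsto.eventually_const_lt ha hg
    filter_upwards [hx_ev, hy_eq, eventually_ge_atTop 1, hga] with t hxt hyt ht1 hgat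
    have ht0 : (0:ℝ) < t := lt_of_lt_of_le one_pos ht1
    have hlb := ML_lb hμ hμ1 hxt
    rw [hyt] at hlb
    have hlog_ub : Real.log (L*t+2) ≤ Real.log (L+2) + Real.log t := by
      have h1 : L*t+2 ≤ (L+2)*t := by nlinarith
      calc Real.log (L*t+2) ≤ Real.log ((L+2)*t) := Real.log_le_log (by positivity) h1
        _ = Real.log (L+2) + Real.log t := Real.log_mul (by positivity) ht0.ne'
    have expand : (1/t) * (L*t - 4 - 3*(Real.log (L+2) + Real.log t))
        = L - 4 * (1/t) - 3 * (Real.log (L+2) * (1/t) + Real.log t / t) := by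
      field_simp
    have step1 : L - 4 * (1/t) - 3 * (Real.log (L+2) * (1/t) + Real.log t / t)
        ≤ (1/t) * Real.log (mittagLeffler μ μ (Ψ * t ^ μ)) := by
      rw [← expand]
      have h2 : L*t - 4 - 3*(Real.log (L+2) + Real.log t)
          ≤ Real.log (mittagLeffler μ μ (Ψ * t ^ μ)) := by linarith
      exact mul_le_mul_of_nonneg_left h2 (by positivity)
    linarith
  · -- upper bound branch
    intro a ha
    set ε : ℝ := (a - L) / (2 * L) with hεdef
    have hε : 0 < ε := by
      apply div_pos (by linarith) (by linarith)
    set K : ℝ := 6 * (1+ε) ^ (2:ℝ) * (1 - (1+ε) ^ (-μ))⁻¹ with hK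
    have hq1 : (1+ε) ^ (-μ) < 1 := q_lt_one hε hμ
    have hK0 : 0 < K := by
      apply mul_pos (by positivity)
      exact inv_pos.2 (by linarith)
    have haL : (1+ε) * L < a := by
      have : ε * L = (a - L) / 2 := by
        rw [hεdef]; field_simp
      nlinarith [this]
    have hu : Tendsto (fun t : ℝ =>
        (1+ε)*L + (Real.log K + 2*Real.log L) * (1/t) + 2*(Real.log t / t))
        atTop (nhds ((1+ε)*L)) := by
      have := ((tendsto_const_nhds (x := (1+ε)*L) (f := atTop)).add
          (h1t.const_mul (Real.log K + 2*Real.log L))).add (hlogt.const_mul 2)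
      simpa using this
    have hua : ∀ᶠ t in atTop,
        (1+ε)*L + (Real.log K + 2*Real.log L) * (1/t) + 2*(Real.log t / t) < a :=
      Filter.Tendsto.eventually_lt_const haL hu
    filter_upwards [hx_ev, hy_eq, eventually_ge_atTop 1, hua] with t hxt hyt ht1 huat
    have ht0 : (0:ℝ) < t := lt_of_lt_of_le one_pos ht1
    have hx1 : (1:ℝ) ≤ Ψ * t ^ μ := by linarith
    have hub := ML_ub hμ (x := Ψ * t ^ μ) hx1 hε
    rw [hyt] at hub
    have hub2 : mittagLeffler μ μ (Ψ * t ^ μ)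
        ≤ K * ((L*t) ^ (2:ℝ) * Real.exp ((1+ε) * (L*t))) := by
      calc mittagLeffler μ μ (Ψ * t ^ μ)
          ≤ (6 * (L*t) ^ (2:ℝ) * Real.exp ((1+ε) * (L*t)) * (1+ε) ^ (2:ℝ))
            * (1 - (1+ε) ^ (-μ))⁻¹ := hub
        _ = K * ((L*t) ^ (2:ℝ) * Real.exp ((1+ε) * (L*t))) := by rw [hK]; ring
    have hLt0 : (0:ℝ) < L * t := by positivity
    have hlogML : Real.log (mittagLeffler μ μ (Ψ * t ^ μ))
        ≤ Real.log K + 2 * (Real.log L + Real.log t) + (1+ε) * (L*t) := by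
      calc Real.log (mittagLeffler μ μ (Ψ * t ^ μ))
          ≤ Real.log (K * ((L*t) ^ (2:ℝ) * Real.exp ((1+ε) * (L*t)))) :=
            Real.log_le_log (ML_pos hμ hx1) hub2
        _ = Real.log K + (2 * Real.log (L*t) + (1+ε) * (L*t)) := by
            rw [Real.log_mul hK0.ne' (by positivity),
              Real.log_mul (Real.rpow_pos_of_pos hLt0 _).ne' (Real.exp_ne_zero _),
              Real.log_rpow hLt0, Real.log_exp]
        _ = Real.log K + 2 * (Real.log L + Real.log t) + (1+ε) * (L*t) := by
            rw [Real.log_mul hL0.ne' ht0.ne']; ring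
    have expand : (1/t) * (Real.log K + 2 * (Real.log L + Real.log t) + (1+ε) * (L*t))
        = (1+ε)*L + (Real.log K + 2*Real.log L) * (1/t) + 2*(Real.log t / t) := by
      field_simp
      ring
    have step : (1/t) * Real.log (mittagLeffler μ μ (Ψ * t ^ μ))
        ≤ (1+ε)*L + (Real.log K + 2*Real.log L) * (1/t) + 2*(Real.log t / t) := by
      rw [← expand]
      exact mul_le_mul_of_nonneg_left hlogML (by positivity)
    linarith
end

section
/- Let α ∈ (1,2), η ∈ (0,2), and let μ be a signed Borel measure on ℝ with ∫_ℝ (1 + |y|^η) |μ|(dy) < ∞. Define J(t,x) = ∫_ℝ (1/π) t^{β/α} / (t^{2β/α} + (x-y)^2) |μ|(dy) for β ∈ (0,1). Then there is a constant C > 0 such that for all t ≥ 1 and x ∈ ℝ, J(t,x) ≤ C (1 + t^{β/α}) (1 + |x|)^{-η}. -/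
open Real MeasureTheory

lemma aux_pow_bound (η : ℝ) (hη : 0 < η) (a : ℝ) (ha : 0 ≤ a) :
    (1 + a) ^ η ≤ 2 ^ η * (1 + a ^ η) := by
  have h1 : (1 + a) ^ η ≤ (2 * max 1 a) ^ η := by
    apply Real.rpow_le_rpow (by positivity) _ hη.le
    rcases le_total a 1 with h | h
    · rw [max_eq_left h]; linarith
    · rw [max_eq_right h]; linarith
  have h2 : (2 * max 1 a) ^ η = 2 ^ η * (max 1 a) ^ η :=
    Real.mul_rpow (by norm_num) (by positivity)
  have h3 : (max 1 a : ℝ) ^ η ≤ 1 + a ^ η := by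
    rcases le_total a 1 with h | h
    · rw [max_eq_left h, Real.one_rpow]
      have : (0:ℝ) ≤ a ^ η := by positivity
      linarith
    · rw [max_eq_right h]
      linarith
  calc (1 + a) ^ η ≤ 2 ^ η * (max 1 a) ^ η := by rw [← h2]; exact h1
    _ ≤ 2 ^ η * (1 + a ^ η) := by
        have : (0:ℝ) < 2 ^ η := by positivity
        nlinarith

lemma key_ineq (η : ℝ) (hη : 0 < η) (hη2 : η < 2) {s : ℝ} (hs : 1 ≤ s) (x y : ℝ) :
    s / (s ^ 2 + (x - y) ^ 2) ≤ 4 ^ η * (1 + s) * (1 + |y| ^ η) * (1 + |x|) ^ (-η) := by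
  have hs0 : (0:ℝ) < s := lt_of_lt_of_le one_pos hs
  have hApos : (0:ℝ) < (1 + |x|) ^ η := Real.rpow_pos_of_pos (by positivity) _
  have h4 : (0:ℝ) < 4 ^ η := by positivity
  have hyη : (0:ℝ) ≤ |y| ^ η := by positivity
  have h44 : (4:ℝ) ^ η = 2 ^ η * 2 ^ η := by
    rw [← Real.mul_rpow (by norm_num) (by norm_num)]; norm_num
  rw [Real.rpow_neg (by positivity), ← div_eq_mul_inv, le_div_iff₀ hApos]
  have hle1 : s / (s ^ 2 + (x - y) ^ 2) ≤ 1 := by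
    rw [div_le_one (by positivity)]
    nlinarith [sq_nonneg (x - y)]
  by_cases hxy : 2 < |x| ∧ |y| < |x| / 2
  · obtain ⟨hx2, hy⟩ := hxy
    have hr : |x| / 2 ≤ |x - y| := by
      have := abs_sub_abs_le_abs_sub x y
      linarith
    have hr1 : 1 < |x - y| := by linarith
    have hgm : s ^ (2 - η) * |x - y| ^ η ≤ s ^ 2 + (x - y) ^ 2 := by
      have h := Real.geom_mean_le_arith_mean2_weighted (w₁ := 1 - η / 2) (w₂ := η / 2)
        (p₁ := s ^ 2) (p₂ := (x - y) ^ 2) (by linarith) (by linarith)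
        (by positivity) (by positivity) (by ring)
      have e1 : (s ^ 2 : ℝ) ^ (1 - η / 2) = s ^ (2 - η) := by
        rw [← Real.rpow_two, ← Real.rpow_mul hs0.le]
        norm_num
        ring_nf
      have e2 : ((x - y) ^ 2 : ℝ) ^ (η / 2) = |x - y| ^ η := by
        rw [← sq_abs, ← Real.rpow_two, ← Real.rpow_mul (abs_nonneg _)]
        congr 1
        ring
      rw [e1, e2] at h
      nlinarith [sq_nonneg s, sq_nonneg (x - y)]
    have hcpos : (0:ℝ) < s ^ (2 - η) * |x - y| ^ η := by positivity
    have step1 : s / (s ^ 2 + (x - y) ^ 2) ≤ s / (s ^ (2 - η) * |x - y| ^ η) := by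
      gcongr
    have step2 : s / (s ^ (2 - η) * |x - y| ^ η) = s ^ (η - 1) / |x - y| ^ η := by
      rw [← div_div]
      congr 1
      rw [show s / s ^ (2 - η) = s ^ (1:ℝ) / s ^ (2 - η) by rw [Real.rpow_one],
        ← Real.rpow_sub hs0]
      congr 1
      ring
    have step3 : s ^ (η - 1) ≤ s := by
      calc s ^ (η - 1) ≤ s ^ (1:ℝ) := Real.rpow_le_rpow_of_exponent_le hs (by linarith)
        _ = s := Real.rpow_one s
    have hxyη : (0:ℝ) < |x - y| ^ η := by positivity
    have step4 : s / (s ^ 2 + (x - y) ^ 2) ≤ s / |x - y| ^ η := by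
      rw [step2] at step1
      calc s / (s ^ 2 + (x - y) ^ 2) ≤ s ^ (η - 1) / |x - y| ^ η := step1
        _ ≤ s / |x - y| ^ η := by gcongr
    have hratio : ((1 + |x|) / |x - y|) ^ η ≤ 4 ^ η := by
      apply Real.rpow_le_rpow (by positivity) _ hη.le
      rw [div_le_iff₀ (by linarith)]
      linarith
    calc s / (s ^ 2 + (x - y) ^ 2) * (1 + |x|) ^ η
        ≤ s / |x - y| ^ η * (1 + |x|) ^ η := by
          apply mul_le_mul_of_nonneg_right step4 hApos.le
      _ = s * ((1 + |x|) / |x - y|) ^ η := by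
          rw [Real.div_rpow (by positivity) (abs_nonneg _)]; ring
      _ ≤ s * 4 ^ η := by
          apply mul_le_mul_of_nonneg_left hratio hs0.le
      _ ≤ 4 ^ η * (1 + s) * (1 + |y| ^ η) := by
          nlinarith [mul_nonneg h4.le hyη, mul_nonneg (mul_nonneg h4.le hs0.le) hyη]
  · have hB : (1 + |x|) ^ η ≤ 4 ^ η * (1 + |y| ^ η) := by
      rcases not_and_or.mp hxy with h | h
      · push_neg at h
        calc (1 + |x|) ^ η ≤ (4:ℝ) ^ η :=
              Real.rpow_le_rpow (by positivity) (by linarith) hη.le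
          _ ≤ 4 ^ η * (1 + |y| ^ η) := by nlinarith
      · push_neg at h
        calc (1 + |x|) ^ η ≤ (2 * (1 + |y|)) ^ η := by
              apply Real.rpow_le_rpow (by positivity) _ hη.le
              have := abs_nonneg y
              linarith
          _ = 2 ^ η * (1 + |y|) ^ η := Real.mul_rpow (by norm_num) (by positivity)
          _ ≤ 2 ^ η * (2 ^ η * (1 + |y| ^ η)) := by
              have h2 : (0:ℝ) < 2 ^ η := by positivity
              have := aux_pow_bound η hη |y| (abs_nonneg y)
              nlinarith
          _ = 4 ^ η * (1 + |y| ^ η) := by rw [h44]; ring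
    calc s / (s ^ 2 + (x - y) ^ 2) * (1 + |x|) ^ η ≤ 1 * (1 + |x|) ^ η := by
          apply mul_le_mul_of_nonneg_right hle1 hApos.le
      _ ≤ 4 ^ η * (1 + |y| ^ η) := by rw [one_mul]; exact hB
      _ ≤ 4 ^ η * (1 + s) * (1 + |y| ^ η) := by
          nlinarith [mul_nonneg h4.le hyη, mul_nonneg (mul_nonneg h4.le hs0.le) hyη]

/-- Theorem 3.6 (case `0 < η < 2`): decay of `J = 𝔊̄_{α,β} ⋆ |μ|`. -/
theorem stmt_11 (α β η : ℝ) (hα : 1 < α) (hα2 : α < 2) (hβ : 0 < β) (hβ1 : β < 1)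
    (hη : 0 < η) (hη2 : η < 2)
    (μ : MeasureTheory.SignedMeasure ℝ)
    (hμ : (∫⁻ y : ℝ, ENNReal.ofReal (1 + |y| ^ η) ∂μ.totalVariation) < ⊤)
    (J : ℝ → ℝ → ℝ)
    (hJ : ∀ t x, J t x =
      ∫ y : ℝ, (1 / π) * t ^ (β / α) / (t ^ (2 * β / α) + (x - y) ^ 2)
        ∂μ.totalVariation) :
    ∃ C : ℝ, 0 < C ∧ ∀ t x : ℝ, 1 ≤ t →
      J t x ≤ C * (1 + t ^ (β / α)) * (1 + |x|) ^ (-η) := by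
  have hπ : (0:ℝ) < π := Real.pi_pos
  set ν := μ.totalVariation with hν
  have hg_meas : Measurable fun y : ℝ => 1 + |y| ^ η := by
    fun_prop
  have hg_int : Integrable (fun y : ℝ => 1 + |y| ^ η) ν := by
    refine ⟨hg_meas.aestronglyMeasurable, ?_⟩
    rw [hasFiniteIntegral_iff_ofReal (ae_of_all _ fun y => by positivity)]
    exact hμ
  set M := ∫ y, (1 + |y| ^ η) ∂ν with hM
  have hM0 : 0 ≤ M := integral_nonneg fun y => by positivity
  refine ⟨(1 / π) * 4 ^ η * (M + 1), by positivity, ?_⟩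
  intro t x ht
  have ht0 : (0:ℝ) < t := lt_of_lt_of_le one_pos ht
  have hs : 1 ≤ t ^ (β / α) := Real.one_le_rpow ht (by positivity)
  set s := t ^ (β / α) with hsdef
  have hs0 : (0:ℝ) < s := lt_of_lt_of_le one_pos hs
  have hts : t ^ (2 * β / α) = s ^ 2 := by
    rw [hsdef, ← Real.rpow_two, ← Real.rpow_mul ht0.le]
    ring_nf
  have hxA : (0:ℝ) < (1 + |x|) ^ (-η) := Real.rpow_pos_of_pos (by positivity) _
  rw [hJ, hts]
  have hbound : ∀ y : ℝ, (1 / π) * s / (s ^ 2 + (x - y) ^ 2) ≤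
      ((1 / π) * 4 ^ η * (1 + s) * (1 + |x|) ^ (-η)) * (1 + |y| ^ η) := by
    intro y
    have h := key_ineq η hη hη2 hs x y
    calc (1 / π) * s / (s ^ 2 + (x - y) ^ 2)
        = (1 / π) * (s / (s ^ 2 + (x - y) ^ 2)) := by ring
      _ ≤ (1 / π) * (4 ^ η * (1 + s) * (1 + |y| ^ η) * (1 + |x|) ^ (-η)) := by
          apply mul_le_mul_of_nonneg_left h (by positivity)
      _ = ((1 / π) * 4 ^ η * (1 + s) * (1 + |x|) ^ (-η)) * (1 + |y| ^ η) := by ring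
  have hint : (∫ y, (1 / π) * s / (s ^ 2 + (x - y) ^ 2) ∂ν) ≤
      ∫ y, ((1 / π) * 4 ^ η * (1 + s) * (1 + |x|) ^ (-η)) * (1 + |y| ^ η) ∂ν := by
    apply integral_mono_of_nonneg
    · exact ae_of_all _ fun y => by positivity
    · exact hg_int.const_mul _
    · exact ae_of_all _ hbound
  rw [integral_const_mul] at hint
  calc (∫ y, (1 / π) * s / (s ^ 2 + (x - y) ^ 2) ∂ν)
      ≤ ((1 / π) * 4 ^ η * (1 + s) * (1 + |x|) ^ (-η)) * M := hint
    _ ≤ ((1 / π) * 4 ^ η * (1 + s) * (1 + |x|) ^ (-η)) * (M + 1) := by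
        apply mul_le_mul_of_nonneg_left (by linarith) (by positivity)
    _ = (1 / π) * 4 ^ η * (M + 1) * (1 + s) * (1 + |x|) ^ (-η) := by ring
end

section
/- Let α ∈ (1,2), η ≥ 2, and μ a signed Borel measure on ℝ with ∫_ℝ (1 + |y|^η)|μ|(dy) < ∞. Define J(t,x) = ∫_ℝ (1/π) t^{β/α}/(t^{2β/α} + (x-y)^2) |μ|(dy), β ∈ (0,1). Then there is C > 0 such that for all t ≥ 1 and x ∈ ℝ, J(t,x) ≤ C (1 + t^{β/α}) (1 + |x|)^{-2}. -/
open Real MeasureTheory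

lemma key_ineq12 {η : ℝ} (hη : 2 ≤ η) (x y : ℝ) :
    (1 + |x|) ^ 2 ≤ 8 * (1 + (x - y) ^ 2) * (1 + |y| ^ η) := by
  have ha : 0 ≤ |y| ^ η := Real.rpow_nonneg (abs_nonneg y) η
  rcases le_total (|y|) 1 with h | h
  · have hy2 : y ^ 2 ≤ 1 := by nlinarith [sq_abs y, abs_nonneg y]
    nlinarith [sq_nonneg (|x| - 1), sq_abs x, abs_nonneg x, sq_nonneg (x - y),
      mul_nonneg (by positivity : (0:ℝ) ≤ 1 + (x - y) ^ 2) ha]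
  · have hy2 : y ^ 2 ≤ |y| ^ η := by
      calc y ^ 2 = |y| ^ (2:ℝ) := by
            rw [← sq_abs, ← Real.rpow_natCast |y| 2]; norm_num
        _ ≤ |y| ^ η := Real.rpow_le_rpow_of_exponent_le h hη
    nlinarith [sq_nonneg (|x| - 1), sq_abs x, abs_nonneg x, sq_nonneg (x - y),
      mul_nonneg (by positivity : (0:ℝ) ≤ (x - y) ^ 2) ha]

/-- Theorem 3.6 (case `η ≥ 2`): decay of `J = 𝔊̄_{α,β} ⋆ |μ|`. -/
theorem stmt_12 (α β η : ℝ) (hα : 1 < α) (hα2 : α < 2) (hβ : 0 < β) (hβ1 : β < 1)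
    (hη : 2 ≤ η)
    (μ : MeasureTheory.SignedMeasure ℝ)
    (hμ : (∫⁻ y : ℝ, ENNReal.ofReal (1 + |y| ^ η) ∂μ.totalVariation) < ⊤)
    (J : ℝ → ℝ → ℝ)
    (hJ : ∀ t x, J t x =
      ∫ y : ℝ, (1 / π) * t ^ (β / α) / (t ^ (2 * β / α) + (x - y) ^ 2)
        ∂μ.totalVariation) :
    ∃ C : ℝ, 0 < C ∧ ∀ t x : ℝ, 1 ≤ t →
      J t x ≤ C * (1 + t ^ (β / α)) * (1 + |x|) ^ (-(2:ℝ)) := by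
  set ν := μ.totalVariation with hν
  have hα0 : (0:ℝ) < α := by linarith
  have hg_meas : Measurable fun y : ℝ => 1 + |y| ^ η := by fun_prop
  have hg_nonneg : ∀ y : ℝ, 0 ≤ 1 + |y| ^ η := fun y => by positivity
  have hg_int : Integrable (fun y : ℝ => 1 + |y| ^ η) ν := by
    refine ⟨hg_meas.aestronglyMeasurable, ?_⟩
    rw [hasFiniteIntegral_iff_ofReal (ae_of_all _ hg_nonneg)]
    exact hμ
  set M := ∫ y : ℝ, (1 + |y| ^ η) ∂ν with hM
  have hM0 : 0 ≤ M := integral_nonneg hg_nonneg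
  have hπ : (0:ℝ) < π := Real.pi_pos
  refine ⟨8 / π * (M + 1), by positivity, ?_⟩
  intro t x ht
  have ht0 : 0 < t := lt_of_lt_of_le one_pos ht
  have hT1 : 1 ≤ t ^ (β / α) := by
    calc (1:ℝ) = t ^ (0:ℝ) := (Real.rpow_zero t).symm
      _ ≤ t ^ (β / α) := Real.rpow_le_rpow_of_exponent_le ht (by positivity)
  have hT0 : 0 < t ^ (β / α) := by positivity
  have hT2 : 1 ≤ t ^ (2 * β / α) := by
    calc (1:ℝ) = t ^ (0:ℝ) := (Real.rpow_zero t).symm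
      _ ≤ t ^ (2 * β / α) := Real.rpow_le_rpow_of_exponent_le ht (by positivity)
  have hx1 : (0:ℝ) < 1 + |x| := by positivity
  have hxp : (1 + |x|) ^ (-(2:ℝ)) = 1 / (1 + |x|) ^ 2 := by
    rw [Real.rpow_neg hx1.le, ← Real.rpow_natCast (1 + |x|) 2]
    norm_num
  set c : ℝ := 8 / π * t ^ (β / α) * (1 / (1 + |x|) ^ 2) with hc
  have hpt : ∀ y : ℝ, (1 / π) * t ^ (β / α) / (t ^ (2 * β / α) + (x - y) ^ 2)
      ≤ c * (1 + |y| ^ η) := by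
    intro y
    have ha : 0 ≤ |y| ^ η := Real.rpow_nonneg (abs_nonneg y) η
    have h1 : (1:ℝ) + (x - y) ^ 2 ≤ t ^ (2 * β / α) + (x - y) ^ 2 := by linarith
    have step1 : (1 / π) * t ^ (β / α) / (t ^ (2 * β / α) + (x - y) ^ 2)
        ≤ (1 / π) * t ^ (β / α) / (1 + (x - y) ^ 2) := by
      gcongr <;> linarith
    refine step1.trans ?_
    have hkey := key_ineq12 hη x y
    have e1 : (1 / π) * t ^ (β / α) / (1 + (x - y) ^ 2)
        = t ^ (β / α) / (π * (1 + (x - y) ^ 2)) := by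
      rw [one_div_mul_eq_div, div_div]
    have e2 : c * (1 + |y| ^ η)
        = (8 * t ^ (β / α) * (1 + |y| ^ η)) / (π * (1 + |x|) ^ 2) := by
      rw [hc]; field_simp
    rw [e1, e2, div_le_div_iff₀ (by positivity) (by positivity)]
    nlinarith [mul_le_mul_of_nonneg_left hkey (mul_nonneg hπ.le hT0.le)]
  have hint : J t x ≤ c * M := by
    rw [hJ t x]
    calc (∫ y : ℝ, (1 / π) * t ^ (β / α) / (t ^ (2 * β / α) + (x - y) ^ 2) ∂ν)
        ≤ ∫ y : ℝ, c * (1 + |y| ^ η) ∂ν := by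
          refine integral_mono_of_nonneg (ae_of_all _ fun y => by positivity)
            (hg_int.const_mul c) (ae_of_all _ hpt)
      _ = c * M := by rw [integral_const_mul]
  refine hint.trans ?_
  rw [hxp, hc]
  have hk : (0:ℝ) ≤ 8 / π := by positivity
  have hu : (0:ℝ) ≤ 1 / (1 + |x|) ^ 2 := by positivity
  have key2 : t ^ (β / α) * M ≤ (M + 1) * (1 + t ^ (β / α)) := by nlinarith
  nlinarith [mul_le_mul_of_nonneg_left key2 (mul_nonneg hk hu)]
end

section
/- Let d ≥ 1, α ∈ (0,2), β ∈ (0,1), and define the d-dimensional reference kernel G_d(t,x) = C_{d,α} t^β / (t^{2β/α} + |x|^2)^{(d+α)/2} for t > 0, x ∈ ℝ^d, with C_{d,α} > 0. Then for all t > 0 and x, y ∈ ℝ^d, G_d(t, x - y) ≥ 2^{-(d+α)} C_{d,α}^{-1} t^{βd/α} G_d(t,x) G_d(t,y). -/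
open Real Finset

/-! Writing `A = t^{2β/α}` and `p = (d+α)/2`, the prefactor `t^{βd/α} t^β` is exactly `A^p`, so
after cancelling the claim becomes `A^p (A + |x-y|²)^p ≤ 4^p (A + |x|²)^p (A + |y|²)^p`.
This is the `p`-th power of `A (A + |x-y|²) ≤ 4 (A + |x|²)(A + |y|²)`, which follows from
`|x-y|² ≤ 2|x|² + 2|y|²`. -/

lemma sum_sub_sq_le {ι : Type*} (s : Finset ι) (x y : ι → ℝ) :
    ∑ k ∈ s, (x k - y k) ^ 2 ≤ 2 * ∑ k ∈ s, x k ^ 2 + 2 * ∑ k ∈ s, y k ^ 2 := by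
  rw [mul_sum, mul_sum, ← sum_add_distrib]
  exact sum_le_sum fun k _ => by nlinarith [sq_nonneg (x k + y k)]

lemma mul_add_le_four_mul_add_mul_add {A u v w : ℝ} (hA : 0 ≤ A) (hu : 0 ≤ u) (hv : 0 ≤ v)
    (hw : w ≤ 2 * u + 2 * v) : A * (A + w) ≤ 4 * ((A + u) * (A + v)) := by
  nlinarith [mul_nonneg hu hv]

lemma rpow_mul_add_rpow_le {A u v w p : ℝ} (hA : 0 ≤ A) (hu : 0 ≤ u) (hv : 0 ≤ v) (hw0 : 0 ≤ w)
    (hw : w ≤ 2 * u + 2 * v) (hp : 0 ≤ p) :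
    A ^ p * (A + w) ^ p ≤ 4 ^ p * ((A + u) ^ p * (A + v) ^ p) := by
  rw [← mul_rpow hA (by positivity), ← mul_rpow (by positivity) (by positivity),
    ← mul_rpow (by norm_num) (by positivity)]
  exact rpow_le_rpow (by positivity) (mul_add_le_four_mul_add_mul_add hA hu hv hw) hp

theorem stmt_16_general (d : ℕ) (α β C : ℝ) (hα : 0 < α)
    (hC : 0 < C)
    (G : ℝ → (Fin d → ℝ) → ℝ)
    (hG : ∀ t x, G t x = C * t ^ β / (t ^ (2 * β / α) + ∑ k, (x k) ^ 2) ^ ((d + α) / 2)) :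
    ∀ (t : ℝ) (x y : Fin d → ℝ), 0 < t →
      G t (x - y) ≥ (2:ℝ) ^ (-((d:ℝ) + α)) * C⁻¹ * t ^ (β * d / α) * G t x * G t y := by
  intro t x y ht
  simp only [hG, Pi.sub_apply]
  set A := t ^ (2 * β / α)
  set p := ((d : ℝ) + α) / 2
  have hA : 0 < A := rpow_pos_of_pos ht _
  have hP : 0 < (A + ∑ k, (x k - y k) ^ 2) ^ p := rpow_pos_of_pos (by positivity) _
  have hkey := rpow_mul_add_rpow_le hA.le (sum_nonneg fun k _ => sq_nonneg (x k))
    (sum_nonneg fun k _ => sq_nonneg (y k)) (sum_nonneg fun k _ => sq_nonneg (x k - y k))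
    (sum_sub_sq_le univ x y) (by positivity : 0 ≤ p)
  have htwo : (2:ℝ) ^ (-((d:ℝ) + α)) = (4 ^ p)⁻¹ := by
    rw [rpow_neg zero_le_two, show (4:ℝ) = 2 ^ (2:ℝ) by norm_num, ← rpow_mul zero_le_two]
    congr 2
    simp only [p]
    ring
  have hpow : t ^ (β * d / α) * t ^ β = A ^ p := by
    rw [← rpow_mul ht.le, ← rpow_add ht]
    congr 1
    field_simp
    ring
  rw [ge_iff_le, htwo]
  calc (4 ^ p)⁻¹ * C⁻¹ * t ^ (β * d / α) * (C * t ^ β / (A + ∑ k, x k ^ 2) ^ p)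
        * (C * t ^ β / (A + ∑ k, y k ^ 2) ^ p)
      = C * t ^ β * (A ^ p / (4 ^ p * ((A + ∑ k, x k ^ 2) ^ p * (A + ∑ k, y k ^ 2) ^ p))) := by
        rw [← hpow]; field_simp
    _ ≤ C * t ^ β * (1 / (A + ∑ k, (x k - y k) ^ 2) ^ p) := by
        refine mul_le_mul_of_nonneg_left ?_ (by positivity)
        rw [div_le_div_iff₀ (by positivity) hP]
        linarith
    _ = C * t ^ β / (A + ∑ k, (x k - y k) ^ 2) ^ p := by ring

/-- Lemma 5.1 (1), d-dimensional case: factorization lower bound for the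
reference kernel `G_d(t,x) = C t^β (t^{2β/α} + |x|²)^{-(d+α)/2}`. -/
theorem stmt_16 (d : ℕ) (hd : 1 ≤ d) (α β C : ℝ) (hα : 0 < α) (hα2 : α < 2)
    (hβ : 0 < β) (hβ1 : β < 1) (hC : 0 < C)
    (G : ℝ → (Fin d → ℝ) → ℝ)
    (hG : ∀ t x, G t x = C * t ^ β / (t ^ (2 * β / α) + ∑ k, (x k) ^ 2) ^ ((d + α) / 2)) :
    ∀ (t : ℝ) (x y : Fin d → ℝ), 0 < t →
      G t (x - y) ≥ (2:ℝ) ^ (-((d:ℝ) + α)) * C⁻¹ * t ^ (β * d / α) * G t x * G t y :=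
  stmt_16_general d α β C hα hC G hG
end
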